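/- arXiv:2302.10598 — 4 statements merged into one kernel-verified Lean document; each statement's English description precedes it below -/
import Mathlib

section
/- Fix α, β > 0 and s ≥ 0. Let v be an s-moderate weight on ℝ^{2d} and set ṽ(k,l) = v(αk, βl) for (k,l) ∈ ℤ^{2d}. Let 1 ≤ p_i, q_i < ∞ (1 ≤ i ≤ r) and 1 ≤ s₁, s₂ < ∞ satisfy 1/p₁ + ⋯ + 1/p_r = 1/s₁ and 1/q₁ + ⋯ + 1/q_r = 1/s₂. Suppose a : ℤ^{2d(r+1)} → ℂ, written a_{ij, m₁n₁, …, m_r n_r} with i,j,m_k,n_k ∈ ℤ^d, satisfies Σ |a_{ij, m₁n₁,…,m_rn_r}| ω_s(αi, βj) ∏_{k=1}^r ω_s(αm_k, βn_k) < ∞ (i.e. a belongs to the weighted space ℓ¹_{Ω̃_s}(ℤ^{2d(r+1)})). Then the multilinear operator 𝒪 defined by 𝒪(c¹,…,c^r)_{i,j} = Σ_{m₁,n₁,…,m_r,n_r ∈ ℤ^d} a_{ij,m₁n₁,…,m_rn_r} ∏_{k=1}^r c^k_{m_k, n_k} is bounded from ℓ_ṽ^{p₁,q₁} × ⋯ ×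 ℓ_ṽ^{p_r,q_r} into ℓ_ṽ^{s₁,s₂}: there is C > 0 with ‖𝒪(c¹,…,c^r)‖_{ℓ_ṽ^{s₁,s₂}} ≤ C ∏_{k=1}^r ‖c^k‖_{ℓ_ṽ^{p_k,q_k}}. -/
/-! Moderateness of `v` gives, for a constant `K`, `v z ≤ K ω_s(z) ∏ₖ ω_s(mₖ) v(mₖ)` for all
points `z, m₁, …, m_r`. Hence every entry of `𝒪(c¹,…,c^r)`, weighted by `ṽ`, is bounded by the `Ω̃_s`-weighted `ℓ¹` mass of
the corresponding row of `a` times `∏ₖ supₓ |cᵏ(x)| ṽ(x)`, and each of these suprema is at most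
`‖cᵏ‖_{ℓ_ṽ^{pₖ,qₖ}}`. Summing over the rows puts the output in `ℓ¹_ṽ`, which embeds into
`ℓ_ṽ^{s₁,s₂}` since `s₁, s₂ ≥ 1`. -/

open MeasureTheory Complex
open scoped Real RealInnerProductSpace ENNReal

noncomputable section

/-- `ℝ^d` as a Euclidean space. -/
abbrev Ed (d : ℕ) := EuclideanSpace ℝ (Fin d)

/-- The lattice `ℤ^d`. -/
abbrev Zd (d : ℕ) := Fin d → ℤ

/-- The lattice point `αk ∈ ℝ^d` for `k ∈ ℤ^d`. -/
def latE {d : ℕ} (α : ℝ) (k : Zd d) : Ed d :=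
  (EuclideanSpace.equiv (Fin d) ℝ).symm fun i => α * (k i : ℝ)

/-- `ω_s(x,ξ) = (1+|x|²+|ξ|²)^{s/2}`. -/
def om {d : ℕ} (s : ℝ) (z : Ed d × Ed d) : ℝ := (1 + ‖z.1‖ ^ 2 + ‖z.2‖ ^ 2) ^ (s / 2)

/-- Weighted mixed-norm `‖c‖_{ℓ_w^{p,q}}` of a sequence on `ℤ^d × ℤ^d`
(first index inner), valued in `ℝ≥0∞`. -/
def seqNorm {d : ℕ} (p q : ℝ) (w : Zd d × Zd d → ℝ) (c : Zd d × Zd d → ℂ) : ℝ≥0∞ :=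
  (∑' l : Zd d, (∑' k : Zd d, ENNReal.ofReal (‖c (k, l)‖ * w (k, l)) ^ p) ^ (q / p)) ^ (1 / q)

namespace ENNReal

theorem sum_rpow_le_rpow_sum {ι : Type*} (s : Finset ι) (g : ι → ℝ≥0∞) {t : ℝ} (ht : 1 ≤ t) :
    ∑ i ∈ s, g i ^ t ≤ (∑ i ∈ s, g i) ^ t := by
  induction s using Finset.cons_induction with
  | empty => simp [zero_rpow_of_pos (zero_lt_one.trans_le ht)]
  | cons i s hi ih =>
    rw [Finset.sum_cons, Finset.sum_cons]
    exact (add_le_add_right ih _).trans (add_rpow_le_rpow_add _ _ ht)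

theorem tsum_rpow_le_rpow_tsum {ι : Type*} (g : ι → ℝ≥0∞) {t : ℝ} (ht : 1 ≤ t) :
    ∑' i, g i ^ t ≤ (∑' i, g i) ^ t := by
  rw [ENNReal.tsum_eq_iSup_sum]
  exact iSup_le fun s => (sum_rpow_le_rpow_sum s g ht).trans
    (rpow_le_rpow (ENNReal.sum_le_tsum s) (zero_le_one.trans ht))

end ENNReal

section MixedNorm

variable {ι ι' : Type*} {p q : ℝ}

def mixedNorm (p q : ℝ) (f : ι × ι' → ℝ≥0∞) : ℝ≥0∞ :=
  (∑' l : ι', (∑' k : ι, f (k, l) ^ p) ^ (q / p)) ^ (1 / q)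

theorem mixedNorm_mono (hp : 0 ≤ p) (hq : 0 ≤ q) {f g : ι × ι' → ℝ≥0∞} (hfg : f ≤ g) :
    mixedNorm p q f ≤ mixedNorm p q g := by
  unfold mixedNorm
  gcongr with l k
  exact hfg (k, l)

theorem mixedNorm_mul_const (hp : 0 < p) (hq : 0 < q) (f : ι × ι' → ℝ≥0∞) (M : ℝ≥0∞) :
    mixedNorm p q (fun x => f x * M) = mixedNorm p q f * M := by
  have hinner : ∀ l : ι', (∑' k : ι, (f (k, l) * M) ^ p) ^ (q / p)
      = (∑' k : ι, f (k, l) ^ p) ^ (q / p) * M ^ q := by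
    intro l
    simp_rw [ENNReal.mul_rpow_of_nonneg _ _ hp.le, ENNReal.tsum_mul_right]
    rw [ENNReal.mul_rpow_of_nonneg _ _ (by positivity), ← ENNReal.rpow_mul,
      mul_div_cancel₀ _ hp.ne']
  simp only [mixedNorm, hinner, ENNReal.tsum_mul_right]
  rw [ENNReal.mul_rpow_of_nonneg _ _ (by positivity), ← ENNReal.rpow_mul, mul_one_div_cancel hq.ne',
    ENNReal.rpow_one]

theorem le_mixedNorm (hp : 0 < p) (hq : 0 < q) (f : ι × ι' → ℝ≥0∞) (x : ι × ι') :
    f x ≤ mixedNorm p q f := by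
  obtain ⟨k, l⟩ := x
  have hcol : f (k, l) ^ q ≤ (∑' k' : ι, f (k', l) ^ p) ^ (q / p) :=
    calc f (k, l) ^ q = (f (k, l) ^ p) ^ (q / p) := by
          rw [← ENNReal.rpow_mul, mul_div_cancel₀ _ hp.ne']
      _ ≤ _ := by
          gcongr
          exact ENNReal.le_tsum (f := fun k' => f (k', l) ^ p) k
  calc f (k, l) = (f (k, l) ^ q) ^ (1 / q) := by
        rw [← ENNReal.rpow_mul, mul_one_div_cancel hq.ne', ENNReal.rpow_one]
    _ ≤ mixedNorm p q f := by
        unfold mixedNorm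
        gcongr
        exact hcol.trans (ENNReal.le_tsum (f := fun l' => (∑' k' : ι, f (k', l') ^ p) ^ (q / p)) l)

theorem mixedNorm_le_tsum (hp : 1 ≤ p) (hq : 1 ≤ q) (f : ι × ι' → ℝ≥0∞) :
    mixedNorm p q f ≤ ∑' x, f x := by
  have hp0 : 0 < p := zero_lt_one.trans_le hp
  have hq0 : 0 < q := zero_lt_one.trans_le hq
  have hinner : ∀ l : ι', (∑' k : ι, f (k, l) ^ p) ^ (q / p) ≤ (∑' k : ι, f (k, l)) ^ q := by
    intro l
    calc (∑' k : ι, f (k, l) ^ p) ^ (q / p) ≤ ((∑' k : ι, f (k, l)) ^ p) ^ (q / p) := by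
          gcongr
          exact ENNReal.tsum_rpow_le_rpow_tsum _ hp
      _ = (∑' k : ι, f (k, l)) ^ q := by rw [← ENNReal.rpow_mul, mul_div_cancel₀ _ hp0.ne']
  calc mixedNorm p q f ≤ (∑' l : ι', (∑' k : ι, f (k, l)) ^ q) ^ (1 / q) := by
        unfold mixedNorm
        gcongr with l
        exact hinner l
    _ ≤ ((∑' l : ι', ∑' k : ι, f (k, l)) ^ q) ^ (1 / q) := by
        gcongr
        exact ENNReal.tsum_rpow_le_rpow_tsum _ hq
    _ = ∑' x, f x := by
        rw [← ENNReal.rpow_mul, mul_one_div_cancel hq0.ne', ENNReal.rpow_one, ENNReal.tsum_comm,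
          ENNReal.tsum_prod']

end MixedNorm

section ModerateWeight

variable {E : Type*} [AddGroup E] {v ω : E → ℝ} {C : ℝ}

theorem le_mul_at_zero_of_moderate (hmod : ∀ z w, v (z + w) ≤ C * ω z * v w) (z : E) :
    v z ≤ C * v 0 * ω z := by
  simpa [mul_right_comm] using hmod z 0

theorem at_zero_le_mul_of_moderate (hω : ∀ z, ω (-z) = ω z)
    (hmod : ∀ z w, v (z + w) ≤ C * ω z * v w) (z : E) : v 0 ≤ C * ω z * v z := by
  simpa [hω] using hmod (-z) z

theorem le_prod_of_moderate {σ : Type*} [Fintype σ] (hv : ∀ z, 0 < v z)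
    (hω : ∀ z, ω (-z) = ω z) (hmod : ∀ z w, v (z + w) ≤ C * ω z * v w) (z : E) (m : σ → E) :
    v z ≤ C * v 0 * (C / v 0) ^ Fintype.card σ * (ω z * ∏ k, (ω (m k) * v (m k))) := by
  have hone : 1 ≤ ∏ k, (C / v 0 * (ω (m k) * v (m k))) := by
    refine Finset.one_le_prod fun k _ => ?_
    rw [div_mul_eq_mul_div, one_le_div (hv 0), ← mul_assoc]
    exact at_zero_le_mul_of_moderate hω hmod (m k)
  calc v z ≤ C * v 0 * ω z := le_mul_at_zero_of_moderate hmod z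
    _ ≤ C * v 0 * ω z * ∏ k, (C / v 0 * (ω (m k) * v (m k))) :=
        le_mul_of_one_le_right ((hv z).le.trans (le_mul_at_zero_of_moderate hmod z)) hone
    _ = C * v 0 * (C / v 0) ^ Fintype.card σ * (ω z * ∏ k, (ω (m k) * v (m k))) := by
        rw [Finset.prod_mul_distrib, Finset.prod_const, Finset.card_univ]
        ring

end ModerateWeight

theorem om_pos {d : ℕ} (s : ℝ) (z : Ed d × Ed d) : 0 < om s z := by
  unfold om
  positivity

theorem om_neg {d : ℕ} (s : ℝ) (z : Ed d × Ed d) : om s (-z) = om s z := by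
  simp [om]

theorem ofReal_norm_tsum_mul_prod_le {𝕜 κ σ : Type*} [NormedField 𝕜] [Fintype σ]
    (a : (σ → κ) → 𝕜) (c : σ → κ → 𝕜) {u : ℝ} {V : κ → ℝ} (hV : ∀ x, 0 ≤ V x) {w : (σ → κ) → ℝ}
    (hw : ∀ m, ‖a m‖ * u ≤ w m * ∏ k, V (m k)) {N : σ → ℝ≥0∞}
    (hN : ∀ k x, ENNReal.ofReal (‖c k x‖ * V x) ≤ N k) :
    ENNReal.ofReal (‖∑' m, a m * ∏ k, c k (m k)‖ * u)
      ≤ (∑' m, ENNReal.ofReal (w m)) * ∏ k, N k := by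
  have hterm : ∀ m, ENNReal.ofReal (‖a m * ∏ k, c k (m k)‖ * u)
      ≤ ENNReal.ofReal (w m) * ∏ k, N k := by
    intro m
    have hreal : ‖a m * ∏ k, c k (m k)‖ * u ≤ w m * ∏ k, (‖c k (m k)‖ * V (m k)) := by
      rw [norm_mul, norm_prod, Finset.prod_mul_distrib]
      calc ‖a m‖ * (∏ k, ‖c k (m k)‖) * u = ‖a m‖ * u * ∏ k, ‖c k (m k)‖ := by ring
        _ ≤ w m * (∏ k, V (m k)) * ∏ k, ‖c k (m k)‖ :=
            mul_le_mul_of_nonneg_right (hw m) (by positivity)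
        _ = w m * ((∏ k, ‖c k (m k)‖) * ∏ k, V (m k)) := by ring
    have hprod : ∀ k ∈ Finset.univ, 0 ≤ ‖c k (m k)‖ * V (m k) := fun k _ =>
      mul_nonneg (norm_nonneg _) (hV _)
    calc ENNReal.ofReal (‖a m * ∏ k, c k (m k)‖ * u)
        ≤ ENNReal.ofReal (w m * ∏ k, (‖c k (m k)‖ * V (m k))) := ENNReal.ofReal_le_ofReal hreal
      _ = ENNReal.ofReal (w m) * ∏ k, ENNReal.ofReal (‖c k (m k)‖ * V (m k)) := by
          rw [ENNReal.ofReal_mul' (Finset.prod_nonneg hprod), ENNReal.ofReal_prod_of_nonneg hprod]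
      _ ≤ ENNReal.ofReal (w m) * ∏ k, N k := by
          gcongr with k
          exact hN k (m k)
  have hsplit : ∀ z : 𝕜, ENNReal.ofReal (‖z‖ * u) = ‖z‖ₑ * ENNReal.ofReal u := fun z => by
    rw [ENNReal.ofReal_mul (norm_nonneg _), ofReal_norm]
  calc ENNReal.ofReal (‖∑' m, a m * ∏ k, c k (m k)‖ * u)
      ≤ (∑' m, ‖a m * ∏ k, c k (m k)‖ₑ) * ENNReal.ofReal u := by
        rw [hsplit]
        gcongr
        exact enorm_tsum_le_tsum_enorm
    _ = ∑' m, ENNReal.ofReal (‖a m * ∏ k, c k (m k)‖ * u) := by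
        simp only [hsplit, ENNReal.tsum_mul_right]
    _ ≤ ∑' m, ENNReal.ofReal (w m) * ∏ k, N k := ENNReal.tsum_le_tsum hterm
    _ = (∑' m, ENNReal.ofReal (w m)) * ∏ k, N k := ENNReal.tsum_mul_right

theorem mixedNorm_multilinear_le {𝕜 ι ι' σ : Type*} [NormedField 𝕜] [Fintype σ]
    {V Ω : ι × ι' → ℝ} (hV : ∀ x, 0 ≤ V x) (hΩ : ∀ x, 0 ≤ Ω x) {K : ℝ} (hK : 0 ≤ K)
    (hVΩ : ∀ x (m : σ → ι × ι'), V x ≤ K * (Ω x * ∏ k, (Ω (m k) * V (m k))))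
    (a : ι × ι' → (σ → ι × ι') → 𝕜)
    (ha : Summable fun y : (ι × ι') × (σ → ι × ι') => ‖a y.1 y.2‖ * Ω y.1 * ∏ k, Ω (y.2 k))
    {s₁ s₂ : ℝ} (hs₁ : 1 ≤ s₁) (hs₂ : 1 ≤ s₂) {p q : σ → ℝ} (hp : ∀ k, 0 < p k)
    (hq : ∀ k, 0 < q k) (c : σ → ι × ι' → 𝕜) :
    mixedNorm s₁ s₂ (fun x => ENNReal.ofReal (‖∑' m, a x m * ∏ k, c k (m k)‖ * V x))
      ≤ ENNReal.ofReal (K * ∑' y : (ι × ι') × (σ → ι × ι'),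
            ‖a y.1 y.2‖ * Ω y.1 * ∏ k, Ω (y.2 k)) *
        ∏ k, mixedNorm (p k) (q k) (fun x => ENNReal.ofReal (‖c k x‖ * V x)) := by
  set W : (ι × ι') × (σ → ι × ι') → ℝ := fun y => ‖a y.1 y.2‖ * Ω y.1 * ∏ k, Ω (y.2 k)
  set M := ∏ k, mixedNorm (p k) (q k) (fun x => ENNReal.ofReal (‖c k x‖ * V x))
  have hW : ∀ y, 0 ≤ K * W y := fun y => by
    have := Finset.prod_nonneg fun k (_ : k ∈ Finset.univ) => hΩ (y.2 k)
    have := hΩ y.1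
    positivity
  have hentry : ∀ x, ENNReal.ofReal (‖∑' m, a x m * ∏ k, c k (m k)‖ * V x)
      ≤ (∑' m, ENNReal.ofReal (K * W (x, m))) * M := by
    refine fun x => ofReal_norm_tsum_mul_prod_le _ _ hV (fun m => ?_)
      (fun k y => le_mixedNorm (hp k) (hq k) _ y)
    calc ‖a x m‖ * V x ≤ ‖a x m‖ * (K * (Ω x * ∏ k, (Ω (m k) * V (m k)))) := by
          gcongr
          exact hVΩ x m
      _ = K * W (x, m) * ∏ k, V (m k) := by
          simp only [W, Finset.prod_mul_distrib]
          ring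
  have hsum : ∑' x, ∑' m, ENNReal.ofReal (K * W (x, m)) = ENNReal.ofReal (K * ∑' y, W y) := by
    rw [← tsum_mul_left, ENNReal.ofReal_tsum_of_nonneg hW (ha.mul_left K)]
    exact (ENNReal.tsum_prod' (f := fun y => ENNReal.ofReal (K * W y))).symm
  calc _ ≤ mixedNorm s₁ s₂ (fun x => (∑' m, ENNReal.ofReal (K * W (x, m))) * M) :=
        mixedNorm_mono (zero_le_one.trans hs₁) (zero_le_one.trans hs₂) hentry
    _ = mixedNorm s₁ s₂ (fun x => ∑' m, ENNReal.ofReal (K * W (x, m))) * M :=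
        mixedNorm_mul_const (zero_lt_one.trans_le hs₁) (zero_lt_one.trans_le hs₂) _ M
    _ ≤ ENNReal.ofReal (K * ∑' y, W y) * M := by
        rw [← hsum]
        gcongr
        exact mixedNorm_le_tsum hs₁ hs₂ _

theorem multilinear_matrix_operator_bounded_general
    (d r : ℕ)
    (α β : ℝ) (s : ℝ)
    (v : Ed d × Ed d → ℝ) (hv_pos : ∀ z, 0 < v z)
    (hv_mod : ∃ C > 0, ∀ z w : Ed d × Ed d,
      v (z + w) ≤ C * (1 + ‖z.1‖ ^ 2 + ‖z.2‖ ^ 2) ^ (s / 2) * v w)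
    (p q : Fin r → ℝ) (s₁ s₂ : ℝ)
    (hp : ∀ i, 1 ≤ p i) (hq : ∀ i, 1 ≤ q i) (hs₁ : 1 ≤ s₁) (hs₂ : 1 ≤ s₂)
    (a : Zd d → Zd d → (Fin r → Zd d × Zd d) → ℂ)
    (ha : Summable fun x : (Zd d × Zd d) × (Fin r → Zd d × Zd d) =>
      ‖a x.1.1 x.1.2 x.2‖ * om s (latE α x.1.1, latE β x.1.2) *
        ∏ k, om s (latE α (x.2 k).1, latE β (x.2 k).2)) :
    ∃ C > 0, ∀ c : Fin r → (Zd d × Zd d → ℂ),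
      seqNorm s₁ s₂ (fun kl => v (latE α kl.1, latE β kl.2))
          (fun ij => ∑' mn : Fin r → Zd d × Zd d, a ij.1 ij.2 mn * ∏ k, c k (mn k))
        ≤ ENNReal.ofReal C *
          ∏ k, seqNorm (p k) (q k) (fun kl => v (latE α kl.1, latE β kl.2)) (c k) := by
  obtain ⟨C, hC, hmod⟩ := hv_mod
  set K := C * v 0 * (C / v 0) ^ r
  have hK : 0 ≤ K := by have := hv_pos 0; positivity
  have hweight : ∀ (x : Zd d × Zd d) (m : Fin r → Zd d × Zd d),
      v (latE α x.1, latE β x.2) ≤ K * (om s (latE α x.1, latE β x.2) *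
        ∏ k, (om s (latE α (m k).1, latE β (m k).2) * v (latE α (m k).1, latE β (m k).2))) := by
    intro x m
    have := le_prod_of_moderate (ω := om s) hv_pos (om_neg s) hmod (latE α x.1, latE β x.2)
      fun k => (latE α (m k).1, latE β (m k).2)
    rwa [Fintype.card_fin] at this
  set A := ∑' x : (Zd d × Zd d) × (Fin r → Zd d × Zd d),
      ‖a x.1.1 x.1.2 x.2‖ * om s (latE α x.1.1, latE β x.1.2) *
        ∏ k, om s (latE α (x.2 k).1, latE β (x.2 k).2)
  refine ⟨max (K * A) 1, lt_max_of_lt_right one_pos, fun c => ?_⟩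
  calc _ ≤ ENNReal.ofReal (K * A) *
        ∏ k, seqNorm (p k) (q k) (fun kl => v (latE α kl.1, latE β kl.2)) (c k) :=
      mixedNorm_multilinear_le (fun _ => (hv_pos _).le) (fun _ => (om_pos s _).le) hK hweight
        (fun ij mn => a ij.1 ij.2 mn) ha hs₁ hs₂ (fun k => zero_lt_one.trans_le (hp k))
        (fun k => zero_lt_one.trans_le (hq k)) c
    _ ≤ _ := by gcongr; exact le_max_left _ _

theorem multilinear_matrix_operator_bounded
    (d r : ℕ) (hd : 1 ≤ d) (hr : 1 ≤ r)
    (α β : ℝ) (hα : 0 < α) (hβ : 0 < β) (s : ℝ) (hs : 0 ≤ s)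
    (v : Ed d × Ed d → ℝ) (hv_pos : ∀ z, 0 < v z) (hv_cont : Continuous v)
    (hv_symm : ∀ z, v (-z) = v z)
    (hv_mod : ∃ C > 0, ∀ z w : Ed d × Ed d,
      v (z + w) ≤ C * (1 + ‖z.1‖ ^ 2 + ‖z.2‖ ^ 2) ^ (s / 2) * v w)
    (p q : Fin r → ℝ) (s₁ s₂ : ℝ)
    (hp : ∀ i, 1 ≤ p i) (hq : ∀ i, 1 ≤ q i) (hs₁ : 1 ≤ s₁) (hs₂ : 1 ≤ s₂)
    (hps : ∑ i, 1 / p i = 1 / s₁) (hqs : ∑ i, 1 / q i = 1 / s₂)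
    (a : Zd d → Zd d → (Fin r → Zd d × Zd d) → ℂ)
    (ha : Summable fun x : (Zd d × Zd d) × (Fin r → Zd d × Zd d) =>
      ‖a x.1.1 x.1.2 x.2‖ * om s (latE α x.1.1, latE β x.1.2) *
        ∏ k, om s (latE α (x.2 k).1, latE β (x.2 k).2)) :
    ∃ C > 0, ∀ c : Fin r → (Zd d × Zd d → ℂ),
      seqNorm s₁ s₂ (fun kl => v (latE α kl.1, latE β kl.2))
          (fun ij => ∑' mn : Fin r → Zd d × Zd d, a ij.1 ij.2 mn * ∏ k, c k (mn k))
        ≤ ENNReal.ofReal C *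
          ∏ k, seqNorm (p k) (q k) (fun kl => v (latE α kl.1, latE β kl.2)) (c k) :=
  multilinear_matrix_operator_bounded_general d r α β s v hv_pos hv_mod p q s₁ s₂ hp hq hs₁ hs₂ a ha
end
end

section
/- Fix α, β > 0 and let Λ = αℤ^d × βℤ^d. Let K = (K_{m',n',m,n,m₀,n₀}) be a complex array indexed by (m',n'), (m,n), (m₀,n₀) ∈ Λ, and define the bilinear operator (K(c,e))_{m',n'} = Σ_{m,n,m₀,n₀} K_{m',n',m,n,m₀,n₀} c_{m,n} e_{m₀,n₀}. If sup_{n} sup_{n₀} Σ_{n'} sup_{m'} Σ_{m} Σ_{m₀} |K_{m',n',m,n,m₀,n₀}| < ∞ (i.e. K ∈ ℓ^∞_n ℓ^∞_{n₀} ℓ¹_{n'} ℓ^∞_{m'} ℓ¹_m ℓ¹_{m₀}), then K is a continuous bilinear operator from ℓ¹_n ℓ^∞_m × ℓ¹_{n₀} ℓ^∞_{m₀} to ℓ¹_{n'} ℓ^∞_{m'}: there is C > 0 with Σ_{n'} sup_{m'} |(K(c,e))_{m',n'}| ≤ C (Σ_n sup_m |c_{m,n}|)(Σ_{n₀} sup_{m₀}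 |e_{m₀,n₀}|). -/
/-!
After the triangle inequality, bound `|c m n|` by `sup_m |c m n|` and `|e m₀ n₀|` by
`sup_{m₀} |e m₀ n₀|`; the sums over `m` and `m₀` then only see `K`. Moving `sup_{m'}` and
`∑_{n'}` inside the sum over the pair `(n, n₀)` leaves that sum weighted by the `ℓ¹ℓ^∞`-norm of
`K` at `(n, n₀)`, which is at most the hypothesised bound, and the sum over `(n, n₀)` factors
into the product of the norms of `c` and `e`. Working in `ℝ≥0∞` makes every exchange of sums
and suprema unconditional.
-/

open scoped ENNReal

noncomputable section

theorem ENNReal.tsum_iSup_tsum_mul_le {ι μ ν : Type*} (w : ι → ℝ≥0∞) (X : μ → ν → ι → ℝ≥0∞) :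
    ∑' n', ⨆ m', ∑' j, w j * X m' n' j ≤ (⨆ j, ∑' n', ⨆ m', X m' n' j) * ∑' j, w j :=
  calc ∑' n', ⨆ m', ∑' j, w j * X m' n' j
      ≤ ∑' n', ∑' j, w j * ⨆ m', X m' n' j :=
        ENNReal.tsum_le_tsum fun n' => iSup_le fun m' =>
          ENNReal.tsum_le_tsum fun j => by gcongr; exact le_iSup (fun m' => X m' n' j) m'
    _ = ∑' j, w j * ∑' n', ⨆ m', X m' n' j := by
        rw [ENNReal.tsum_comm]
        simp only [ENNReal.tsum_mul_left]
    _ ≤ ∑' j, w j * ⨆ j, ∑' n', ⨆ m', X m' n' j :=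
        ENNReal.tsum_le_tsum fun j =>
          by gcongr; exact le_iSup (fun j => ∑' n', ⨆ m', X m' n' j) j
    _ = (⨆ j, ∑' n', ⨆ m', X m' n' j) * ∑' j, w j := by
        rw [ENNReal.tsum_mul_right, mul_comm]

theorem enorm_tsum_bilinear_le {R ι κ ι₀ κ₀ : Type*} [NormedRing R] [NormMulClass R]
    (k : ι → κ → ι₀ → κ₀ → R) (c : ι → κ → R) (e : ι₀ → κ₀ → R) :
    ‖∑' m, ∑' n, ∑' m₀, ∑' n₀, k m n m₀ n₀ * c m n * e m₀ n₀‖ₑ ≤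
      ∑' p : κ × κ₀, ((⨆ m, ‖c m p.1‖ₑ) * ⨆ m₀, ‖e m₀ p.2‖ₑ) *
        ∑' m, ∑' m₀, ‖k m p.1 m₀ p.2‖ₑ := by
  set a : κ → ℝ≥0∞ := fun n => ⨆ m, ‖c m n‖ₑ
  set b : κ₀ → ℝ≥0∞ := fun n₀ => ⨆ m₀, ‖e m₀ n₀‖ₑ
  calc ‖∑' m, ∑' n, ∑' m₀, ∑' n₀, k m n m₀ n₀ * c m n * e m₀ n₀‖ₑ
      ≤ ∑' m, ∑' n, ∑' m₀, ∑' n₀, ‖k m n m₀ n₀‖ₑ * (a n * b n₀) := by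
        refine enorm_tsum_le_tsum_enorm.trans (ENNReal.tsum_le_tsum fun m => ?_)
        refine enorm_tsum_le_tsum_enorm.trans (ENNReal.tsum_le_tsum fun n => ?_)
        refine enorm_tsum_le_tsum_enorm.trans (ENNReal.tsum_le_tsum fun m₀ => ?_)
        refine enorm_tsum_le_tsum_enorm.trans (ENNReal.tsum_le_tsum fun n₀ => ?_)
        rw [enorm_mul, enorm_mul, mul_assoc]
        gcongr
        exacts [le_iSup (fun m => ‖c m n‖ₑ) m, le_iSup (fun m₀ => ‖e m₀ n₀‖ₑ) m₀]
    _ = ∑' n, ∑' n₀, ∑' m, ∑' m₀, ‖k m n m₀ n₀‖ₑ * (a n * b n₀) := by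
        rw [ENNReal.tsum_comm]
        refine tsum_congr fun n => ?_
        exact (tsum_congr fun m => ENNReal.tsum_comm).trans ENNReal.tsum_comm
    _ = _ := by
        rw [ENNReal.tsum_prod']
        simp only [ENNReal.tsum_mul_right, mul_comm]
        rfl

theorem bilinear_matrix_l1linf_bounded_general
    (d : ℕ)
    (K : Zd d → Zd d → Zd d → Zd d → Zd d → Zd d → ℂ)
    -- `K m' n' m n m₀ n₀`, with `K ∈ ℓ^∞_n ℓ^∞_{n₀} ℓ¹_{n'} ℓ^∞_{m'} ℓ¹_m ℓ¹_{m₀}` :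
    (hK : (⨆ n : Zd d, ⨆ n₀ : Zd d, ∑' n' : Zd d, ⨆ m' : Zd d,
        ∑' m : Zd d, ∑' m₀ : Zd d, ENNReal.ofReal ‖K m' n' m n m₀ n₀‖) < ⊤) :
    ∃ C > 0, ∀ c e : Zd d → Zd d → ℂ,
      (∑' n' : Zd d, ⨆ m' : Zd d, ENNReal.ofReal
          ‖∑' m : Zd d, ∑' n : Zd d, ∑' m₀ : Zd d, ∑' n₀ : Zd d,
              K m' n' m n m₀ n₀ * c m n * e m₀ n₀‖)
        ≤ ENNReal.ofReal C *
            ((∑' n : Zd d, ⨆ m : Zd d, ENNReal.ofReal ‖c m n‖) *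
              (∑' n₀ : Zd d, ⨆ m₀ : Zd d, ENNReal.ofReal ‖e m₀ n₀‖)) := by
  simp only [ofReal_norm] at hK ⊢
  set S := ⨆ n, ⨆ n₀, ∑' n', ⨆ m', ∑' m, ∑' m₀, ‖K m' n' m n m₀ n₀‖ₑ
  have hSC : S ≤ ENNReal.ofReal (S.toReal + 1) := by
    rw [ENNReal.ofReal_add ENNReal.toReal_nonneg zero_le_one, ENNReal.ofReal_toReal hK.ne]
    exact le_self_add
  refine ⟨S.toReal + 1, by positivity, fun c e => ?_⟩
  calc _ ≤ ∑' n', ⨆ m', ∑' p : Zd d × Zd d,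
          ((⨆ m, ‖c m p.1‖ₑ) * ⨆ m₀, ‖e m₀ p.2‖ₑ) * ∑' m, ∑' m₀, ‖K m' n' m p.1 m₀ p.2‖ₑ :=
        ENNReal.tsum_le_tsum fun n' => iSup_mono fun m' => enorm_tsum_bilinear_le _ c e
    _ ≤ S * ∑' p : Zd d × Zd d, (⨆ m, ‖c m p.1‖ₑ) * ⨆ m₀, ‖e m₀ p.2‖ₑ := by
        refine (ENNReal.tsum_iSup_tsum_mul_le _ _).trans_eq ?_
        rw [iSup_prod]
    _ ≤ _ := by
        rw [ENNReal.tsum_prod', ← ENNReal.tsum_mul_right]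
        simp only [ENNReal.tsum_mul_left]
        gcongr

theorem bilinear_matrix_l1linf_bounded
    (d : ℕ) (hd : 1 ≤ d) (α β : ℝ) (hα : 0 < α) (hβ : 0 < β)
    (K : Zd d → Zd d → Zd d → Zd d → Zd d → Zd d → ℂ)
    -- `K m' n' m n m₀ n₀`, with `K ∈ ℓ^∞_n ℓ^∞_{n₀} ℓ¹_{n'} ℓ^∞_{m'} ℓ¹_m ℓ¹_{m₀}` :
    (hK : (⨆ n : Zd d, ⨆ n₀ : Zd d, ∑' n' : Zd d, ⨆ m' : Zd d,
        ∑' m : Zd d, ∑' m₀ : Zd d, ENNReal.ofReal ‖K m' n' m n m₀ n₀‖) < ⊤) :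
    ∃ C > 0, ∀ c e : Zd d → Zd d → ℂ,
      (∑' n' : Zd d, ⨆ m' : Zd d, ENNReal.ofReal
          ‖∑' m : Zd d, ∑' n : Zd d, ∑' m₀ : Zd d, ∑' n₀ : Zd d,
              K m' n' m n m₀ n₀ * c m n * e m₀ n₀‖)
        ≤ ENNReal.ofReal C *
            ((∑' n : Zd d, ⨆ m : Zd d, ENNReal.ofReal ‖c m n‖) *
              (∑' n₀ : Zd d, ⨆ m₀ : Zd d, ENNReal.ofReal ‖e m₀ n₀‖)) :=
  bilinear_matrix_l1linf_bounded_general d K hK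
end
end

section
/- Fix α, β > 0 and let Λ = αℤ^d × βℤ^d. Let K = (K_{m',n',m,n,m₀,n₀}) be a complex array indexed by (m',n'), (m,n), (m₀,n₀) ∈ Λ, and define (K(c,e))_{m',n'} = Σ_{m,n,m₀,n₀} K_{m',n',m,n,m₀,n₀} c_{m,n} e_{m₀,n₀}. If sup_{n'} Σ_{n₀} Σ_{n} sup_{m} sup_{m₀} Σ_{m'} |K_{m',n',m,n,m₀,n₀}| < ∞ (i.e. K ∈ ℓ^∞_{n'} ℓ¹_{n₀} ℓ¹_n ℓ^∞_m ℓ^∞_{m₀} ℓ¹_{m'}), then K is a continuous bilinear operator from ℓ^∞_n ℓ¹_m × ℓ^∞_{n₀} ℓ¹_{m₀} to ℓ^∞_{n'} ℓ¹_{m'}: there is C > 0 with sup_{n'} Σ_{m'} |(K(c,e))_{m',n'}| ≤ C (sup_n Σ_m |c_{m,n}|)(sup_{n₀} Σ_{m₀} |e_{m₀,n₀}|). -/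
/-! Bound `‖(K(c,e))_{m',n'}‖` by `∑ |K| |c| |e|` and, working in `ℝ≥0∞` where sums commute
freely, sum over `m'` innermost, then over `m, m₀`, then over `n, n₀`. For fixed `n, n₀` the
kernel `∑_{m'} |K|` is only needed in `ℓ^∞_{m,m₀}`, against `c(·,n), e(·,n₀) ∈ ℓ¹`; the result is
then summed against the `ℓ^∞` bounds `sup_n ∑_m |c|` and `sup_{n₀} ∑_{m₀} |e|`, which costs the
`ℓ¹_{n₀} ℓ¹_n` norm of the kernel. -/

open scoped ENNReal

noncomputable section

namespace ENNReal

variable {ι κ : Type*}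

theorem tsum_tsum_mul_le_iSup_mul_tsum_mul_tsum (b : ι → κ → ℝ≥0∞) (x : ι → ℝ≥0∞)
    (y : κ → ℝ≥0∞) :
    ∑' i, ∑' j, b i j * (x i * y j) ≤ (⨆ i, ⨆ j, b i j) * ((∑' i, x i) * ∑' j, y j) :=
  calc ∑' i, ∑' j, b i j * (x i * y j)
      ≤ ∑' i, ∑' j, (⨆ i, ⨆ j, b i j) * (x i * y j) := by
        gcongr with i j
        exact le_iSup₂ (f := b) i j
    _ = (⨆ i, ⨆ j, b i j) * ((∑' i, x i) * ∑' j, y j) := by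
        simp only [ENNReal.tsum_mul_left, ENNReal.tsum_mul_right]

theorem tsum_tsum_mul_le_tsum_tsum_mul_iSup_mul_iSup (b : ι → κ → ℝ≥0∞) (x : ι → ℝ≥0∞)
    (y : κ → ℝ≥0∞) :
    ∑' i, ∑' j, b i j * (x i * y j) ≤ (∑' j, ∑' i, b i j) * ((⨆ i, x i) * ⨆ j, y j) :=
  calc ∑' i, ∑' j, b i j * (x i * y j)
      ≤ ∑' i, ∑' j, b i j * ((⨆ i, x i) * ⨆ j, y j) := by
        gcongr with i j
        exacts [le_iSup x i, le_iSup y j]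
    _ = (∑' j, ∑' i, b i j) * ((⨆ i, x i) * ⨆ j, y j) := by
        rw [ENNReal.tsum_comm]
        simp only [ENNReal.tsum_mul_right]

variable {ι' ν ι₀ ν₀ : Type*}

theorem tsum₅_mul_mul_le (a : ι' → ι → ν → ι₀ → ν₀ → ℝ≥0∞)
    (x : ι → ν → ℝ≥0∞) (y : ι₀ → ν₀ → ℝ≥0∞) :
    ∑' m', ∑' m, ∑' n, ∑' m₀, ∑' n₀, a m' m n m₀ n₀ * (x m n * y m₀ n₀)
      ≤ (∑' n₀, ∑' n, ⨆ m, ⨆ m₀, ∑' m', a m' m n m₀ n₀) *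
          ((⨆ n, ∑' m, x m n) * ⨆ n₀, ∑' m₀, y m₀ n₀) :=
  calc ∑' m', ∑' m, ∑' n, ∑' m₀, ∑' n₀, a m' m n m₀ n₀ * (x m n * y m₀ n₀)
      = ∑' n, ∑' n₀, ∑' m, ∑' m₀, (∑' m', a m' m n m₀ n₀) * (x m n * y m₀ n₀) := by
        simp only [← ENNReal.tsum_mul_right]
        rw [ENNReal.tsum_comm]
        simp_rw [ENNReal.tsum_comm (α := ι')]
        rw [ENNReal.tsum_comm]
        simp_rw [ENNReal.tsum_comm (α := ι₀) (β := ν₀), ENNReal.tsum_comm (α := ι) (β := ν₀)]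
    _ ≤ ∑' n, ∑' n₀, (⨆ m, ⨆ m₀, ∑' m', a m' m n m₀ n₀) *
          ((∑' m, x m n) * ∑' m₀, y m₀ n₀) := by
        gcongr with n n₀
        exact tsum_tsum_mul_le_iSup_mul_tsum_mul_tsum _ _ _
    _ ≤ _ := tsum_tsum_mul_le_tsum_tsum_mul_iSup_mul_iSup _ _ _

end ENNReal

theorem enorm_tsum₄_le_tsum₄_enorm {ι κ μ ν E : Type*} [NormedAddCommGroup E]
    (f : ι → κ → μ → ν → E) :
    ‖∑' i, ∑' j, ∑' k, ∑' l, f i j k l‖ₑ ≤ ∑' i, ∑' j, ∑' k, ∑' l, ‖f i j k l‖ₑ := by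
  calc ‖∑' i, ∑' j, ∑' k, ∑' l, f i j k l‖ₑ
      ≤ ∑' i, ‖∑' j, ∑' k, ∑' l, f i j k l‖ₑ := enorm_tsum_le_tsum_enorm
    _ ≤ ∑' i, ∑' j, ‖∑' k, ∑' l, f i j k l‖ₑ := by gcongr; exact enorm_tsum_le_tsum_enorm
    _ ≤ ∑' i, ∑' j, ∑' k, ‖∑' l, f i j k l‖ₑ := by gcongr; exact enorm_tsum_le_tsum_enorm
    _ ≤ ∑' i, ∑' j, ∑' k, ∑' l, ‖f i j k l‖ₑ := by gcongr; exact enorm_tsum_le_tsum_enorm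

theorem bilinear_matrix_linfl1_bounded_general
    (d : ℕ)
    (K : Zd d → Zd d → Zd d → Zd d → Zd d → Zd d → ℂ)
    -- `K m' n' m n m₀ n₀`, with `K ∈ ℓ^∞_{n'} ℓ¹_{n₀} ℓ¹_n ℓ^∞_m ℓ^∞_{m₀} ℓ¹_{m'}` :
    (hK : (⨆ n' : Zd d, ∑' n₀ : Zd d, ∑' n : Zd d, ⨆ m : Zd d, ⨆ m₀ : Zd d,
        ∑' m' : Zd d, ENNReal.ofReal ‖K m' n' m n m₀ n₀‖) < ⊤) :
    ∃ C > 0, ∀ c e : Zd d → Zd d → ℂ,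
      (⨆ n' : Zd d, ∑' m' : Zd d, ENNReal.ofReal
          ‖∑' m : Zd d, ∑' n : Zd d, ∑' m₀ : Zd d, ∑' n₀ : Zd d,
              K m' n' m n m₀ n₀ * c m n * e m₀ n₀‖)
        ≤ ENNReal.ofReal C *
            ((⨆ n : Zd d, ∑' m : Zd d, ENNReal.ofReal ‖c m n‖) *
              (⨆ n₀ : Zd d, ∑' m₀ : Zd d, ENNReal.ofReal ‖e m₀ n₀‖)) := by
  simp only [ofReal_norm] at hK ⊢
  set M := ⨆ n', ∑' n₀, ∑' n, ⨆ m, ⨆ m₀, ∑' m', ‖K m' n' m n m₀ n₀‖ₑ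
  have hMC : M ≤ ENNReal.ofReal (M.toReal + 1) := by
    rw [← ENNReal.ofReal_toReal hK.ne]
    exact ENNReal.ofReal_le_ofReal (by simp)
  refine ⟨M.toReal + 1, by positivity, fun c e => iSup_le fun n' => ?_⟩
  calc ∑' m', ‖∑' m, ∑' n, ∑' m₀, ∑' n₀, K m' n' m n m₀ n₀ * c m n * e m₀ n₀‖ₑ
      ≤ ∑' m', ∑' m, ∑' n, ∑' m₀, ∑' n₀, ‖K m' n' m n m₀ n₀‖ₑ * (‖c m n‖ₑ * ‖e m₀ n₀‖ₑ) := by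
        gcongr with m'
        simpa only [enorm_mul, mul_assoc] using
          enorm_tsum₄_le_tsum₄_enorm fun m n m₀ n₀ => K m' n' m n m₀ n₀ * c m n * e m₀ n₀
    _ ≤ M * ((⨆ n, ∑' m, ‖c m n‖ₑ) * ⨆ n₀, ∑' m₀, ‖e m₀ n₀‖ₑ) := by
        refine (ENNReal.tsum₅_mul_mul_le _ _ _).trans ?_
        gcongr
        exact le_iSup (fun n' => ∑' n₀, ∑' n, ⨆ m, ⨆ m₀, ∑' m', ‖K m' n' m n m₀ n₀‖ₑ) n'
    _ ≤ _ := by gcongr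

theorem bilinear_matrix_linfl1_bounded
    (d : ℕ) (hd : 1 ≤ d) (α β : ℝ) (hα : 0 < α) (hβ : 0 < β)
    (K : Zd d → Zd d → Zd d → Zd d → Zd d → Zd d → ℂ)
    -- `K m' n' m n m₀ n₀`, with `K ∈ ℓ^∞_{n'} ℓ¹_{n₀} ℓ¹_n ℓ^∞_m ℓ^∞_{m₀} ℓ¹_{m'}` :
    (hK : (⨆ n' : Zd d, ∑' n₀ : Zd d, ∑' n : Zd d, ⨆ m : Zd d, ⨆ m₀ : Zd d,
        ∑' m' : Zd d, ENNReal.ofReal ‖K m' n' m n m₀ n₀‖) < ⊤) :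
    ∃ C > 0, ∀ c e : Zd d → Zd d → ℂ,
      (⨆ n' : Zd d, ∑' m' : Zd d, ENNReal.ofReal
          ‖∑' m : Zd d, ∑' n : Zd d, ∑' m₀ : Zd d, ∑' n₀ : Zd d,
              K m' n' m n m₀ n₀ * c m n * e m₀ n₀‖)
        ≤ ENNReal.ofReal C *
            ((⨆ n : Zd d, ∑' m : Zd d, ENNReal.ofReal ‖c m n‖) *
              (⨆ n₀ : Zd d, ∑' m₀ : Zd d, ENNReal.ofReal ‖e m₀ n₀‖)) :=
  bilinear_matrix_linfl1_bounded_general d K hK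
end
end

section
/- Fix α, β > 0 and let Λ = αℤ^d × βℤ^d. Let K = (K_{m',n',m,n,m₀,n₀}) be a complex array indexed by (m',n'), (m,n), (m₀,n₀) ∈ Λ, and define (K(c,e))_{m',n'} = Σ_{m,n,m₀,n₀} K_{m',n',m,n,m₀,n₀} c_{m,n} e_{m₀,n₀}. Suppose all four of the following are finite: (a) sup_n sup_{n₀} Σ_{n'} sup_{m'} Σ_m Σ_{m₀} |K|; (b) sup_{n'} Σ_n Σ_{n₀} sup_m sup_{m₀} Σ_{m'} |K|; (c) sup_{n'} sup_{m'} Σ_n Σ_m Σ_{n₀} Σ_{m₀} |K|; (d) sup_n sup_m sup_{n₀} sup_{m₀} Σ_{n'} Σ_{m'} |K|. Then for every 1 ≤ p, q ≤ ∞, K is a continuous bilinear operator from ℓ^{p,q} × ℓ^{p,q} to ℓ^{p,q}: there is C > 0 (independent of p, q) with ‖K(c,e)‖_{ℓ^{p,q}} ≤ C ‖c‖_{ℓ^{p,q}} ‖e‖_{ℓ^{p,q}}. -/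
open scoped ENNReal

noncomputable section

/-- `ℓ^p`-type norm (sup at `p = ∞`, sum otherwise) of an `ℝ≥0∞`-valued sequence. -/
def lpS {d : ℕ} (p : ℝ≥0∞) (f : Zd d → ℝ≥0∞) : ℝ≥0∞ :=
  if p = ⊤ then ⨆ k, f k else (∑' k, f k ^ p.toReal) ^ (1 / p.toReal)

/-- Mixed norm `‖c‖_{ℓ^{p,q}} = ‖c‖_{ℓ^q_n ℓ^p_m}` of `c = (c_{m,n})`. -/
def lpq {d : ℕ} (p q : ℝ≥0∞) (c : Zd d → Zd d → ℂ) : ℝ≥0∞ :=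
  lpS q fun n => lpS p fun m => ENNReal.ofReal ‖c m n‖

/-!
Since `‖K(c, e)‖ ≤ T(|c|, |e|)` for the positive operator `T` with kernel `|K|`, everything can be
done in `ℝ≥0∞`. Conditions (a)–(d) say precisely that `T` is bounded on the four corner spaces
`ℓ^{∞,1}`, `ℓ^{1,∞}`, `ℓ^{∞,∞}` and `ℓ^{1,1}`, and the other `ℓ^{p,q}` are reached by a
real-variable interpolation. Put `θ = 1/p`, `φ = 1/q` and, by homogeneity, let
`‖a‖_{p,q} = ‖b‖_{p,q} = 1`. Then `a ≤ u^φ v^θ` with `u_{m,n} = ‖a_{·,n}‖_p^q` and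
`v_{m,n} = (a_{m,n} / ‖a_{·,n}‖_p)^p`, where `u`, `v`, `1` and `uv` lie in the unit balls of the
four corner spaces, and `u^φ v^θ = u^{(1-θ)φ} v^{θ(1-φ)} 1^{(1-θ)(1-φ)} (uv)^{θφ}`. Hölder's
inequality for the positive bilinear form `T(·, ·)_{m',n'}` bounds `T(a, b)` pointwise by the
product of the `T` of the four pairs of factors to these powers; a mixed-norm Hölder inequality
bounds the `ℓ^{p,q}` norm of that product by the product of the corresponding corner norms, each
at most the matching kernel bound.
-/

open MeasureTheory in
theorem ENNReal.tsum_mul_prod_rpow_le {ι κ : Type*} (w : ι → ℝ≥0∞) (s : Finset κ)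
    (f : κ → ι → ℝ≥0∞) {t : κ → ℝ} (ht : ∑ j ∈ s, t j = 1) (ht0 : ∀ j ∈ s, 0 ≤ t j) :
    ∑' i, w i * ∏ j ∈ s, f j i ^ t j ≤ ∏ j ∈ s, (∑' i, w i * f j i) ^ t j := by
  let _ : MeasurableSpace ι := ⊤
  have := ENNReal.lintegral_prod_norm_pow_le (μ := Measure.count.withDensity w) s (f := f)
    (fun j _ => measurable_from_top.aemeasurable) ht ht0
  simpa only [lintegral_withDensity_eq_lintegral_mul _ measurable_from_top measurable_from_top,
    lintegral_count, Pi.mul_apply] using this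

lemma ENNReal.toReal_pos_of_one_le {p : ℝ≥0∞} (hp : 1 ≤ p) (hp' : p ≠ ⊤) : 0 < p.toReal :=
  ENNReal.toReal_pos (one_pos.trans_le hp).ne' hp'

lemma ENNReal.toReal_inv_mem_Icc {p : ℝ≥0∞} (hp : 1 ≤ p) : p⁻¹.toReal ∈ Set.Icc (0 : ℝ) 1 :=
  ⟨ENNReal.toReal_nonneg, ENNReal.toReal_le_of_le_ofReal zero_le_one (by simpa using hp)⟩

/-- `(1 - θ) φ`, `θ (1 - φ)`, `(1 - θ) (1 - φ)` and `θ φ` are the weights of the four corners of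
`[0, 1]²` in the bilinear interpolation of `(θ, φ)`. -/
lemma ENNReal.rpow_mul_rpow_eq_corners (x y : ℝ≥0∞) {θ φ : ℝ} (hθ0 : 0 ≤ θ) (hθ1 : θ ≤ 1)
    (hφ0 : 0 ≤ φ) (hφ1 : φ ≤ 1) :
    x ^ φ * y ^ θ
      = x ^ ((1 - θ) * φ) * y ^ (θ * (1 - φ)) * 1 ^ ((1 - θ) * (1 - φ)) * (x * y) ^ (θ * φ) := by
  have h1θ : 0 ≤ 1 - θ := by linarith
  have h1φ : 0 ≤ 1 - φ := by linarith
  rw [ENNReal.one_rpow, mul_one, ENNReal.mul_rpow_of_nonneg _ _ (by positivity)]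
  calc x ^ φ * y ^ θ = x ^ ((1 - θ) * φ + θ * φ) * y ^ (θ * (1 - φ) + θ * φ) := by ring_nf
    _ = _ := by
      rw [ENNReal.rpow_add_of_nonneg _ _ (by positivity) (by positivity),
        ENNReal.rpow_add_of_nonneg _ _ (by positivity) (by positivity)]
      ring

lemma ENNReal.rpow_corners_eq_self (x : ℝ≥0∞) {θ φ : ℝ} (hθ0 : 0 ≤ θ) (hθ1 : θ ≤ 1)
    (hφ0 : 0 ≤ φ) (hφ1 : φ ≤ 1) :
    x ^ ((1 - θ) * φ) * x ^ (θ * (1 - φ)) * x ^ ((1 - θ) * (1 - φ)) * x ^ (θ * φ) = x := by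
  have h1θ : 0 ≤ 1 - θ := by linarith
  have h1φ : 0 ≤ 1 - φ := by linarith
  rw [← ENNReal.rpow_add_of_nonneg _ _ (by positivity) (by positivity),
    ← ENNReal.rpow_add_of_nonneg _ _ (by positivity) (by positivity),
    ← ENNReal.rpow_add_of_nonneg _ _ (by positivity) (by positivity)]
  ring_nf
  exact ENNReal.rpow_one x

section lpS

variable {d : ℕ} {p : ℝ≥0∞} {f g : Zd d → ℝ≥0∞}

lemma lpS_top : lpS ⊤ f = ⨆ i, f i := if_pos rfl

lemma lpS_of_ne_top (hp : p ≠ ⊤) : lpS p f = (∑' i, f i ^ p.toReal) ^ p.toReal⁻¹ := by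
  rw [lpS, if_neg hp, one_div]

lemma lpS_one : lpS 1 f = ∑' i, f i := by
  simp [lpS_of_ne_top]

lemma lpS_mono (h : ∀ i, f i ≤ g i) : lpS p f ≤ lpS p g := by
  by_cases hp : p = ⊤
  · simp only [hp, lpS_top]; exact iSup_mono h
  · rw [lpS_of_ne_top hp, lpS_of_ne_top hp]
    gcongr with i
    exact h i

lemma lpS_const_mul (hp : 1 ≤ p) (c : ℝ≥0∞) : lpS p (fun i => c * f i) = c * lpS p f := by
  by_cases hp' : p = ⊤
  · simp only [hp', lpS_top, ENNReal.mul_iSup]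
  · have hr := ENNReal.toReal_pos_of_one_le hp hp'
    rw [lpS_of_ne_top hp', lpS_of_ne_top hp']
    simp only [ENNReal.mul_rpow_of_nonneg _ _ hr.le, ENNReal.tsum_mul_left]
    rw [ENNReal.mul_rpow_of_nonneg _ _ (by positivity), ENNReal.rpow_rpow_inv hr.ne']

lemma le_lpS (hp : 1 ≤ p) (i : Zd d) : f i ≤ lpS p f := by
  by_cases hp' : p = ⊤
  · simp only [hp', lpS_top]; exact le_iSup f i
  · have hr := ENNReal.toReal_pos_of_one_le hp hp'
    rw [lpS_of_ne_top hp', ← ENNReal.rpow_rpow_inv hr.ne' (f i)]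
    gcongr
    exact ENNReal.le_tsum i

lemma lpS_rpow_toReal (hp : 1 ≤ p) (hp' : p ≠ ⊤) : lpS p f ^ p.toReal = ∑' i, f i ^ p.toReal := by
  rw [lpS_of_ne_top hp', ENNReal.rpow_inv_rpow (ENNReal.toReal_pos_of_one_le hp hp').ne']

lemma lpS_rpow_mul_rpow_le (hp : 1 ≤ p) {s t : ℝ} (hs : 0 ≤ s) (ht : 0 ≤ t)
    (hst : s + t = p⁻¹.toReal) :
    lpS p (fun i => f i ^ s * g i ^ t) ≤ (∑' i, f i) ^ s * (∑' i, g i) ^ t := by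
  by_cases hp' : p = ⊤
  · obtain ⟨rfl, rfl⟩ : s = 0 ∧ t = 0 := by
      simp only [hp', ENNReal.inv_top, ENNReal.toReal_zero] at hst
      constructor <;> linarith
    simp [hp', lpS_top]
  have hr := ENNReal.toReal_pos_of_one_le hp hp'
  have hsum : ∑ j : Fin 2, ![s * p.toReal, t * p.toReal] j = 1 := by
    rw [ENNReal.toReal_inv] at hst
    simp [← add_mul, hst, hr.ne']
  have := ENNReal.tsum_mul_prod_rpow_le 1 Finset.univ ![f, g] hsum
    (by intro j _; fin_cases j <;> simp <;> positivity)
  simp only [Fin.prod_univ_two, Pi.one_apply, one_mul, Matrix.cons_val_zero,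
    Matrix.cons_val_one, Matrix.cons_val_fin_one] at this
  rw [lpS_of_ne_top hp', ← ENNReal.rpow_rpow_inv hr.ne' ((∑' i, f i) ^ s * _)]
  gcongr
  simpa only [ENNReal.mul_rpow_of_nonneg _ _ hr.le, ← ENNReal.rpow_mul] using this

lemma exists_le_lpS_mul_rpow (hp : 1 ≤ p) (hf : lpS p f ≠ ⊤) :
    ∃ u : Zd d → ℝ≥0∞, ∑' i, u i ≤ 1 ∧ ∀ i, f i ≤ lpS p f * u i ^ p⁻¹.toReal := by
  by_cases hp' : p = ⊤
  · exact ⟨0, by simp, fun i => by simpa [hp'] using le_lpS hp i⟩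
  have hr := ENNReal.toReal_pos_of_one_le hp hp'
  set N := lpS p f
  refine ⟨fun i => (f i / N) ^ p.toReal, ?_, fun i => ?_⟩
  · calc ∑' i, (f i / N) ^ p.toReal = (∑' i, f i ^ p.toReal) / N ^ p.toReal := by
          simp_rw [ENNReal.div_rpow_of_nonneg _ _ hr.le, div_eq_mul_inv, ENNReal.tsum_mul_right]
      _ ≤ 1 := by rw [← lpS_rpow_toReal hp hp']; exact ENNReal.div_self_le_one
  · rw [ENNReal.toReal_inv, ENNReal.rpow_rpow_inv hr.ne']
    rcases eq_or_ne N 0 with hN | hN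
    · simpa [hN] using le_lpS hp i (f := f) |>.trans_eq hN
    · rw [ENNReal.mul_div_cancel hN hf]

end lpS

def eLpq {d : ℕ} (p q : ℝ≥0∞) (F : Zd d → Zd d → ℝ≥0∞) : ℝ≥0∞ :=
  lpS q fun n => lpS p fun m => F m n

section eLpq

variable {d : ℕ} {p q : ℝ≥0∞} {F G : Zd d → Zd d → ℝ≥0∞}

lemma eLpq_mono (h : ∀ m n, F m n ≤ G m n) : eLpq p q F ≤ eLpq p q G :=
  lpS_mono fun n => lpS_mono fun m => h m n

lemma eLpq_const_mul (hp : 1 ≤ p) (hq : 1 ≤ q) (c : ℝ≥0∞) :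
    eLpq p q (fun m n => c * F m n) = c * eLpq p q F := by
  simp only [eLpq, lpS_const_mul hp, lpS_const_mul hq]

lemma eLpq_zero (hp : 1 ≤ p) (hq : 1 ≤ q) : eLpq p q (fun _ _ : Zd d => 0) = 0 := by
  simpa using eLpq_const_mul hp hq (F := fun _ _ : Zd d => 0) 0

lemma le_eLpq (hp : 1 ≤ p) (hq : 1 ≤ q) (m n : Zd d) : F m n ≤ eLpq p q F :=
  (le_lpS hp m).trans (le_lpS hq n (f := fun n => lpS p fun m => F m n))

lemma eLpq_top_top : eLpq ⊤ ⊤ F = ⨆ n, ⨆ m, F m n := by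
  simp only [eLpq, lpS_top]

lemma eLpq_top_one : eLpq ⊤ 1 F = ∑' n, ⨆ m, F m n := by
  simp only [eLpq, lpS_top, lpS_one]

lemma eLpq_one_top : eLpq 1 ⊤ F = ⨆ n, ∑' m, F m n := by
  simp only [eLpq, lpS_top, lpS_one]

lemma eLpq_one_one : eLpq 1 1 F = ∑' n, ∑' m, F m n := by
  simp only [eLpq, lpS_one]

lemma exists_le_rpow_mul_rpow_of_eLpq_le_one (hp : 1 ≤ p) (hq : 1 ≤ q) (hF : eLpq p q F ≤ 1) :
    ∃ u v : Zd d → Zd d → ℝ≥0∞, eLpq ⊤ 1 u ≤ 1 ∧ eLpq 1 ⊤ v ≤ 1 ∧ eLpq 1 1 (u * v) ≤ 1 ∧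
      ∀ m n, F m n ≤ u m n ^ q⁻¹.toReal * v m n ^ p⁻¹.toReal := by
  set x : Zd d → ℝ≥0∞ := fun n => lpS p fun m => F m n
  have hx : lpS q x ≤ 1 := hF
  have hx_ne_top : ∀ n, x n ≠ ⊤ := fun n =>
    ((le_lpS hq n).trans hx).trans_lt ENNReal.one_lt_top |>.ne
  choose v hv_sum hv using fun n => exists_le_lpS_mul_rpow hp (hx_ne_top n)
  obtain ⟨u, hu_sum, hu⟩ := exists_le_lpS_mul_rpow hq (hx.trans_lt ENNReal.one_lt_top).ne
  refine ⟨fun _ n => u n, fun m n => v n m, ?_, ?_, ?_, fun m n => ?_⟩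
  · simpa only [eLpq_top_one, iSup_const] using hu_sum
  · simpa only [eLpq_one_top] using iSup_le hv_sum
  · calc eLpq 1 1 ((fun _ n => u n) * fun m n => v n m) = ∑' n, u n * ∑' m, v n m := by
          simp only [eLpq_one_one, Pi.mul_apply, ENNReal.tsum_mul_left]
      _ ≤ ∑' n, u n * 1 := by gcongr with n; exact hv_sum n
      _ ≤ 1 := by simpa only [mul_one] using hu_sum
  · calc F m n ≤ x n * v n m ^ p⁻¹.toReal := hv n m
      _ ≤ u n ^ q⁻¹.toReal * v n m ^ p⁻¹.toReal := by
          gcongr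
          simpa using (hu n).trans (mul_le_of_le_one_left' hx)

lemma eLpq_rpow_mul_le_corners (hp : 1 ≤ p) (hq : 1 ≤ q) (wa wb wc wd : Zd d → Zd d → ℝ≥0∞)
    {tA tB tC tD : ℝ} (hA : 0 ≤ tA) (hB : 0 ≤ tB) (hC : 0 ≤ tC) (hD : 0 ≤ tD)
    (hBD : tB + tD = p⁻¹.toReal) (hAD : tA + tD = q⁻¹.toReal) :
    eLpq p q (fun m n => wa m n ^ tA * wb m n ^ tB * wc m n ^ tC * wd m n ^ tD)
      ≤ eLpq ⊤ 1 wa ^ tA * eLpq 1 ⊤ wb ^ tB * eLpq ⊤ ⊤ wc ^ tC * eLpq 1 1 wd ^ tD := by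
  set sa : Zd d → ℝ≥0∞ := fun n => ⨆ m, wa m n
  set sb : Zd d → ℝ≥0∞ := fun n => ∑' m, wb m n
  set sd : Zd d → ℝ≥0∞ := fun n => ∑' m, wd m n
  set Wb := eLpq 1 ⊤ wb
  set Wc := eLpq ⊤ ⊤ wc
  have inner : ∀ n, lpS p (fun m => wa m n ^ tA * wb m n ^ tB * wc m n ^ tC * wd m n ^ tD)
      ≤ (Wc ^ tC * Wb ^ tB) * (sa n ^ tA * sd n ^ tD) := fun n => calc
    _ ≤ lpS p (fun m => (sa n ^ tA * Wc ^ tC) * (wb m n ^ tB * wd m n ^ tD)) := by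
        refine lpS_mono fun m => ?_
        calc _ = (wa m n ^ tA * wc m n ^ tC) * (wb m n ^ tB * wd m n ^ tD) := by ring
          _ ≤ _ := by
            gcongr
            exacts [le_iSup (wa · n) m, le_eLpq le_top le_top m n]
    _ ≤ (sa n ^ tA * Wc ^ tC) * (sb n ^ tB * sd n ^ tD) := by
        rw [lpS_const_mul hp]
        gcongr
        exact lpS_rpow_mul_rpow_le hp hB hD hBD
    _ = (Wc ^ tC * sb n ^ tB) * (sa n ^ tA * sd n ^ tD) := by ring
    _ ≤ (Wc ^ tC * Wb ^ tB) * (sa n ^ tA * sd n ^ tD) := by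
        gcongr
        exact (le_iSup sb n).trans_eq eLpq_one_top.symm
  calc _ ≤ lpS q (fun n => (Wc ^ tC * Wb ^ tB) * (sa n ^ tA * sd n ^ tD)) := lpS_mono inner
    _ ≤ (Wc ^ tC * Wb ^ tB) * ((∑' n, sa n) ^ tA * (∑' n, sd n) ^ tD) := by
        rw [lpS_const_mul hq]
        gcongr
        exact lpS_rpow_mul_rpow_le hq hA hD hAD
    _ = _ := by
        rw [eLpq_top_one, eLpq_one_one]
        ring

end eLpq

section bilinearForm

variable {d : ℕ}

def bilinearForm (κ : Zd d → Zd d → Zd d → Zd d → ℝ≥0∞) (u v : Zd d → Zd d → ℝ≥0∞) : ℝ≥0∞ :=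
  ∑' m, ∑' n, ∑' m₀, ∑' n₀, κ m n m₀ n₀ * u m n * v m₀ n₀

def bilinearOp (k : Zd d → Zd d → Zd d → Zd d → Zd d → Zd d → ℝ≥0∞)
    (u v : Zd d → Zd d → ℝ≥0∞) (m' n' : Zd d) : ℝ≥0∞ :=
  bilinearForm (k m' n') u v

variable {κ : Zd d → Zd d → Zd d → Zd d → ℝ≥0∞} {u v : Zd d → Zd d → ℝ≥0∞}

lemma bilinearForm_eq_tsum_prod :
    bilinearForm κ u v = ∑' z : (Zd d × Zd d) × (Zd d × Zd d),
      κ z.1.1 z.1.2 z.2.1 z.2.2 * (u z.1.1 z.1.2 * v z.2.1 z.2.2) := by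
  simp only [bilinearForm, ENNReal.tsum_prod', mul_assoc]

lemma bilinearForm_eq_tsum_n_n₀_m_m₀ :
    bilinearForm κ u v = ∑' n, ∑' n₀, ∑' m, ∑' m₀, κ m n m₀ n₀ * u m n * v m₀ n₀ := by
  rw [bilinearForm, ENNReal.tsum_comm]
  exact tsum_congr fun n => (tsum_congr fun m => ENNReal.tsum_comm).trans ENNReal.tsum_comm

lemma bilinearForm_mono {u' v' : Zd d → Zd d → ℝ≥0∞} (hu : ∀ m n, u m n ≤ u' m n)
    (hv : ∀ m n, v m n ≤ v' m n) : bilinearForm κ u v ≤ bilinearForm κ u' v' := by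
  unfold bilinearForm
  gcongr with m n m₀ n₀
  exacts [hu m n, hv m₀ n₀]

lemma bilinearForm_const_mul (a b : ℝ≥0∞) :
    bilinearForm κ (fun m n => a * u m n) (fun m n => b * v m n) = a * b * bilinearForm κ u v := by
  simp only [bilinearForm, ← ENNReal.tsum_mul_left]
  congr! 8 with m n m₀ n₀
  ring

lemma tsum_bilinearForm {ι : Type*} (κ : ι → Zd d → Zd d → Zd d → Zd d → ℝ≥0∞) :
    ∑' i, bilinearForm (κ i) u v = bilinearForm (fun m n m₀ n₀ => ∑' i, κ i m n m₀ n₀) u v := by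
  simp only [bilinearForm_eq_tsum_prod, ← ENNReal.tsum_mul_right]
  exact ENNReal.tsum_comm

lemma bilinearForm_prod_rpow_le {ι : Type*} (s : Finset ι) (u v : ι → Zd d → Zd d → ℝ≥0∞)
    {t : ι → ℝ} (ht : ∑ j ∈ s, t j = 1) (ht0 : ∀ j ∈ s, 0 ≤ t j) :
    bilinearForm κ (fun m n => ∏ j ∈ s, u j m n ^ t j) (fun m n => ∏ j ∈ s, v j m n ^ t j)
      ≤ ∏ j ∈ s, bilinearForm κ (u j) (v j) ^ t j := by
  simp only [bilinearForm_eq_tsum_prod, ← Finset.prod_mul_distrib]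
  convert ENNReal.tsum_mul_prod_rpow_le _ s
    (fun j (z : (Zd d × Zd d) × (Zd d × Zd d)) => u j z.1.1 z.1.2 * v j z.2.1 z.2.2) ht ht0
    using 4 with z
  exact Finset.prod_congr rfl fun j hj => (ENNReal.mul_rpow_of_nonneg _ _ (ht0 j hj)).symm

lemma bilinearForm_le_tsum_iSup :
    bilinearForm κ u v
      ≤ ∑' n, ∑' n₀, (∑' m, ∑' m₀, κ m n m₀ n₀) * ((⨆ m, u m n) * ⨆ m₀, v m₀ n₀) := by
  rw [bilinearForm_eq_tsum_n_n₀_m_m₀]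
  simp only [← ENNReal.tsum_mul_right, mul_assoc]
  refine ENNReal.tsum_le_tsum fun n => ENNReal.tsum_le_tsum fun n₀ =>
    ENNReal.tsum_le_tsum fun m => ENNReal.tsum_le_tsum fun m₀ => ?_
  gcongr
  exacts [le_iSup (u · n) m, le_iSup (v · n₀) m₀]

lemma bilinearForm_le_eLpq_top_top :
    bilinearForm κ u v ≤ (∑' n, ∑' m, ∑' n₀, ∑' m₀, κ m n m₀ n₀) * eLpq ⊤ ⊤ u * eLpq ⊤ ⊤ v := by
  have hu : ∀ n, ⨆ m, u m n ≤ eLpq ⊤ ⊤ u := fun n => iSup_le fun m => le_eLpq le_top le_top m n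
  have hv : ∀ n, ⨆ m, v m n ≤ eLpq ⊤ ⊤ v := fun n => iSup_le fun m => le_eLpq le_top le_top m n
  calc bilinearForm κ u v
      ≤ ∑' n, ∑' n₀, (∑' m, ∑' m₀, κ m n m₀ n₀) * (eLpq ⊤ ⊤ u * eLpq ⊤ ⊤ v) := by
        refine bilinearForm_le_tsum_iSup.trans (ENNReal.tsum_le_tsum fun n =>
          ENNReal.tsum_le_tsum fun n₀ => ?_)
        gcongr
        exacts [hu n, hv n₀]
    _ = (∑' n, ∑' m, ∑' n₀, ∑' m₀, κ m n m₀ n₀) * eLpq ⊤ ⊤ u * eLpq ⊤ ⊤ v := by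
        simp only [mul_assoc, ENNReal.tsum_mul_right]
        exact congrArg (· * _) (tsum_congr fun n => ENNReal.tsum_comm)

lemma bilinearForm_le_eLpq_one_one :
    bilinearForm κ u v ≤ (⨆ n, ⨆ m, ⨆ n₀, ⨆ m₀, κ m n m₀ n₀) * eLpq 1 1 u * eLpq 1 1 v := by
  calc bilinearForm κ u v
      ≤ ∑' n, ∑' n₀, ∑' m, ∑' m₀, (⨆ n, ⨆ m, ⨆ n₀, ⨆ m₀, κ m n m₀ n₀) * u m n * v m₀ n₀ := by
        rw [bilinearForm_eq_tsum_n_n₀_m_m₀]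
        refine ENNReal.tsum_le_tsum fun n => ENNReal.tsum_le_tsum fun n₀ =>
          ENNReal.tsum_le_tsum fun m => ENNReal.tsum_le_tsum fun m₀ => ?_
        gcongr
        exact le_iSup_of_le n <| le_iSup_of_le m <| le_iSup_of_le n₀ <| le_iSup (κ m n · n₀) m₀
    _ = _ := by simp only [eLpq_one_one, ENNReal.tsum_mul_left, ENNReal.tsum_mul_right, mul_assoc]

lemma bilinearForm_le_eLpq_one_top :
    bilinearForm κ u v ≤ (∑' n, ∑' n₀, ⨆ m, ⨆ m₀, κ m n m₀ n₀) * eLpq 1 ⊤ u * eLpq 1 ⊤ v := by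
  have hu : ∀ n, ∑' m, u m n ≤ eLpq 1 ⊤ u := fun n => by
    rw [eLpq_one_top]; exact le_iSup (fun n => ∑' m, u m n) n
  have hv : ∀ n, ∑' m, v m n ≤ eLpq 1 ⊤ v := fun n => by
    rw [eLpq_one_top]; exact le_iSup (fun n => ∑' m, v m n) n
  calc bilinearForm κ u v
      ≤ ∑' n, ∑' n₀, ∑' m, ∑' m₀, (⨆ m, ⨆ m₀, κ m n m₀ n₀) * u m n * v m₀ n₀ := by
        rw [bilinearForm_eq_tsum_n_n₀_m_m₀]
        refine ENNReal.tsum_le_tsum fun n => ENNReal.tsum_le_tsum fun n₀ =>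
          ENNReal.tsum_le_tsum fun m => ENNReal.tsum_le_tsum fun m₀ => ?_
        gcongr
        exact le_iSup_of_le m <| le_iSup (κ m n · n₀) m₀
    _ = ∑' n, ∑' n₀, (⨆ m, ⨆ m₀, κ m n m₀ n₀) * ((∑' m, u m n) * ∑' m₀, v m₀ n₀) := by
        simp only [ENNReal.tsum_mul_left, ENNReal.tsum_mul_right, mul_assoc]
    _ ≤ ∑' n, ∑' n₀, (⨆ m, ⨆ m₀, κ m n m₀ n₀) * (eLpq 1 ⊤ u * eLpq 1 ⊤ v) := by
        refine ENNReal.tsum_le_tsum fun n => ENNReal.tsum_le_tsum fun n₀ => ?_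
        gcongr
        exacts [hu n, hv n₀]
    _ = _ := by simp only [ENNReal.tsum_mul_right, mul_assoc]

end bilinearForm

section bilinearOp

variable {d : ℕ}

def kernelBoundA (k : Zd d → Zd d → Zd d → Zd d → Zd d → Zd d → ℝ≥0∞) : ℝ≥0∞ :=
  ⨆ n, ⨆ n₀, ∑' n', ⨆ m', ∑' m, ∑' m₀, k m' n' m n m₀ n₀

def kernelBoundB (k : Zd d → Zd d → Zd d → Zd d → Zd d → Zd d → ℝ≥0∞) : ℝ≥0∞ :=
  ⨆ n', ∑' n, ∑' n₀, ⨆ m, ⨆ m₀, ∑' m', k m' n' m n m₀ n₀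

def kernelBoundC (k : Zd d → Zd d → Zd d → Zd d → Zd d → Zd d → ℝ≥0∞) : ℝ≥0∞ :=
  ⨆ n', ⨆ m', ∑' n, ∑' m, ∑' n₀, ∑' m₀, k m' n' m n m₀ n₀

def kernelBoundD (k : Zd d → Zd d → Zd d → Zd d → Zd d → Zd d → ℝ≥0∞) : ℝ≥0∞ :=
  ⨆ n, ⨆ m, ⨆ n₀, ⨆ m₀, ∑' n', ∑' m', k m' n' m n m₀ n₀

variable {p q : ℝ≥0∞} {k : Zd d → Zd d → Zd d → Zd d → Zd d → Zd d → ℝ≥0∞}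
  {u v : Zd d → Zd d → ℝ≥0∞}

lemma bilinearOp_const_mul (a b : ℝ≥0∞) :
    bilinearOp k (fun m n => a * u m n) (fun m n => b * v m n)
      = fun m' n' => a * b * bilinearOp k u v m' n' :=
  funext₂ fun _ _ => bilinearForm_const_mul a b

lemma eLpq_top_one_bilinearOp_le :
    eLpq ⊤ 1 (bilinearOp k u v) ≤ kernelBoundA k * eLpq ⊤ 1 u * eLpq ⊤ 1 v := by
  calc eLpq ⊤ 1 (bilinearOp k u v)
      ≤ ∑' n', ∑' n, ∑' n₀, (⨆ m', ∑' m, ∑' m₀, k m' n' m n m₀ n₀) *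
          ((⨆ m, u m n) * ⨆ m₀, v m₀ n₀) := by
        rw [eLpq_top_one]
        refine ENNReal.tsum_le_tsum fun n' => iSup_le fun m' =>
          bilinearForm_le_tsum_iSup.trans <| ENNReal.tsum_le_tsum fun n =>
            ENNReal.tsum_le_tsum fun n₀ => ?_
        gcongr
        exact le_iSup (fun m' => ∑' m, ∑' m₀, k m' n' m n m₀ n₀) m'
    _ = ∑' n, ∑' n₀, (∑' n', ⨆ m', ∑' m, ∑' m₀, k m' n' m n m₀ n₀) *
          ((⨆ m, u m n) * ⨆ m₀, v m₀ n₀) := by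
        simp only [← ENNReal.tsum_mul_right]
        exact ENNReal.tsum_comm.trans (tsum_congr fun n => ENNReal.tsum_comm)
    _ ≤ ∑' n, ∑' n₀, kernelBoundA k * ((⨆ m, u m n) * ⨆ m₀, v m₀ n₀) := by
        refine ENNReal.tsum_le_tsum fun n => ENNReal.tsum_le_tsum fun n₀ => ?_
        gcongr
        exact le_iSup₂ (f := fun n n₀ => ∑' n', ⨆ m', ∑' m, ∑' m₀, k m' n' m n m₀ n₀) n n₀
    _ = _ := by simp only [eLpq_top_one, ENNReal.tsum_mul_left, ENNReal.tsum_mul_right, mul_assoc]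

lemma eLpq_one_top_bilinearOp_le :
    eLpq 1 ⊤ (bilinearOp k u v) ≤ kernelBoundB k * eLpq 1 ⊤ u * eLpq 1 ⊤ v := by
  simp only [eLpq_one_top (F := bilinearOp k u v), bilinearOp, tsum_bilinearForm]
  refine iSup_le fun n' => bilinearForm_le_eLpq_one_top.trans ?_
  gcongr
  exact le_iSup (fun n' => ∑' n, ∑' n₀, ⨆ m, ⨆ m₀, ∑' m', k m' n' m n m₀ n₀) n'

lemma eLpq_top_top_bilinearOp_le :
    eLpq ⊤ ⊤ (bilinearOp k u v) ≤ kernelBoundC k * eLpq ⊤ ⊤ u * eLpq ⊤ ⊤ v := by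
  rw [eLpq_top_top]
  refine iSup₂_le fun n' m' => bilinearForm_le_eLpq_top_top.trans ?_
  gcongr
  exact le_iSup₂ (f := fun n' m' => ∑' n, ∑' m, ∑' n₀, ∑' m₀, k m' n' m n m₀ n₀) n' m'

lemma eLpq_one_one_bilinearOp_le :
    eLpq 1 1 (bilinearOp k u v) ≤ kernelBoundD k * eLpq 1 1 u * eLpq 1 1 v := by
  simp only [eLpq_one_one (F := bilinearOp k u v), bilinearOp, tsum_bilinearForm]
  exact bilinearForm_le_eLpq_one_one

lemma bilinearOp_le_rpow_corners {θ φ : ℝ} (hθ0 : 0 ≤ θ) (hθ1 : θ ≤ 1) (hφ0 : 0 ≤ φ) (hφ1 : φ ≤ 1)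
    {a b ua ub va vb : Zd d → Zd d → ℝ≥0∞} (ha : ∀ m n, a m n ≤ ua m n ^ φ * ub m n ^ θ)
    (hb : ∀ m n, b m n ≤ va m n ^ φ * vb m n ^ θ) (m' n' : Zd d) :
    bilinearOp k a b m' n'
      ≤ bilinearOp k ua va m' n' ^ ((1 - θ) * φ) * bilinearOp k ub vb m' n' ^ (θ * (1 - φ)) *
        bilinearOp k 1 1 m' n' ^ ((1 - θ) * (1 - φ)) *
        bilinearOp k (ua * ub) (va * vb) m' n' ^ (θ * φ) := by
  have h1θ : 0 ≤ 1 - θ := by linarith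
  have h1φ : 0 ≤ 1 - φ := by linarith
  let t : Fin 4 → ℝ := ![(1 - θ) * φ, θ * (1 - φ), (1 - θ) * (1 - φ), θ * φ]
  have hprod : ∀ (w u v : Zd d → Zd d → ℝ≥0∞), (∀ m n, w m n ≤ u m n ^ φ * v m n ^ θ) →
      ∀ m n, w m n ≤ ∏ j, ![u, v, 1, u * v] j m n ^ t j := fun w u v hw m n => by
    simpa [Fin.prod_univ_four, t, ENNReal.rpow_mul_rpow_eq_corners _ _ hθ0 hθ1 hφ0 hφ1]
      using hw m n
  have ht : ∑ j, t j = 1 := by simp [t, Fin.sum_univ_four]; ring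
  have ht0 : ∀ j ∈ Finset.univ, 0 ≤ t j := by
    intro j _; fin_cases j <;> simp [t] <;> positivity
  have := (bilinearForm_mono (κ := k m' n') (hprod a ua ub ha) (hprod b va vb hb)).trans
    (bilinearForm_prod_rpow_le _ _ _ ht ht0)
  simp only [Fin.prod_univ_four] at this
  exact this

lemma eLpq_bilinearOp_le_of_unit_ball (hp : 1 ≤ p) (hq : 1 ≤ q) {M : ℝ≥0∞} (hM : M ≠ 0)
    (h : ∀ a b, eLpq p q a ≤ 1 → eLpq p q b ≤ 1 → eLpq p q (bilinearOp k a b) ≤ M)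
    (a b : Zd d → Zd d → ℝ≥0∞) :
    eLpq p q (bilinearOp k a b) ≤ M * eLpq p q a * eLpq p q b := by
  set X := eLpq p q a
  set Y := eLpq p q b
  by_cases h0 : X = 0 ∨ Y = 0
  · have hab : ∀ m n m₀ n₀, a m n * b m₀ n₀ = 0 := fun m n m₀ n₀ => by
      rcases h0 with h0 | h0
      · simp [nonpos_iff_eq_zero.mp ((le_eLpq hp hq m n).trans_eq h0)]
      · simp [nonpos_iff_eq_zero.mp ((le_eLpq hp hq m₀ n₀).trans_eq h0)]
    have : bilinearOp k a b = fun _ _ => 0 := by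
      funext m' n'
      simp [bilinearOp, bilinearForm, mul_assoc, hab]
    rw [this, eLpq_zero hp hq]
    exact zero_le
  by_cases htop : X = ⊤ ∨ Y = ⊤
  · rcases htop with htop | htop <;> simp [htop, hM, not_or.mp h0]
  push Not at h0 htop
  have hscale : ∀ (c : Zd d → Zd d → ℝ≥0∞) (Z : ℝ≥0∞), Z ≠ 0 → Z ≠ ⊤ →
      c = fun m n => Z * (Z⁻¹ * c m n) := fun c Z h0 htop => by
    funext m n
    rw [← mul_assoc, ENNReal.mul_inv_cancel h0 htop, one_mul]
  have hnorm : ∀ (c : Zd d → Zd d → ℝ≥0∞), eLpq p q c ≠ 0 → eLpq p q c ≠ ⊤ →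
      eLpq p q (fun m n => (eLpq p q c)⁻¹ * c m n) ≤ 1 := fun c h0 htop => by
    rw [eLpq_const_mul hp hq, ENNReal.inv_mul_cancel h0 htop]
  calc eLpq p q (bilinearOp k a b)
      = eLpq p q (bilinearOp k (fun m n => X * (X⁻¹ * a m n)) fun m n => Y * (Y⁻¹ * b m n)) := by
        rw [← hscale a X h0.1 htop.1, ← hscale b Y h0.2 htop.2]
    _ = X * Y * eLpq p q (bilinearOp k (fun m n => X⁻¹ * a m n) fun m n => Y⁻¹ * b m n) := by
        rw [bilinearOp_const_mul, eLpq_const_mul hp hq]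
    _ ≤ X * Y * M := by gcongr; exact h _ _ (hnorm a h0.1 htop.1) (hnorm b h0.2 htop.2)
    _ = M * X * Y := by ring

theorem eLpq_bilinearOp_le (hp : 1 ≤ p) (hq : 1 ≤ q) {M : ℝ≥0∞} (hM : M ≠ 0)
    (hA : kernelBoundA k ≤ M) (hB : kernelBoundB k ≤ M) (hC : kernelBoundC k ≤ M)
    (hD : kernelBoundD k ≤ M) (a b : Zd d → Zd d → ℝ≥0∞) :
    eLpq p q (bilinearOp k a b) ≤ M * eLpq p q a * eLpq p q b := by
  refine eLpq_bilinearOp_le_of_unit_ball hp hq hM (fun a b ha hb => ?_) a b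
  obtain ⟨hθ0, hθ1⟩ := ENNReal.toReal_inv_mem_Icc hp
  obtain ⟨hφ0, hφ1⟩ := ENNReal.toReal_inv_mem_Icc hq
  have h1θ : 0 ≤ 1 - p⁻¹.toReal := by linarith
  have h1φ : 0 ≤ 1 - q⁻¹.toReal := by linarith
  obtain ⟨ua, ub, hua, hub, hud, hau⟩ := exists_le_rpow_mul_rpow_of_eLpq_le_one hp hq ha
  obtain ⟨va, vb, hva, hvb, hvd, hbv⟩ := exists_le_rpow_mul_rpow_of_eLpq_le_one hp hq hb
  have h1 : eLpq ⊤ ⊤ (1 : Zd d → Zd d → ℝ≥0∞) ≤ 1 := by simp [eLpq_top_top]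
  calc eLpq p q (bilinearOp k a b)
      ≤ _ := eLpq_mono (bilinearOp_le_rpow_corners hθ0 hθ1 hφ0 hφ1 hau hbv)
    _ ≤ _ := eLpq_rpow_mul_le_corners hp hq _ _ _ _ (by positivity) (by positivity) (by positivity)
          (by positivity) (by ring) (by ring)
    _ ≤ M ^ ((1 - p⁻¹.toReal) * q⁻¹.toReal) * M ^ (p⁻¹.toReal * (1 - q⁻¹.toReal)) *
          M ^ ((1 - p⁻¹.toReal) * (1 - q⁻¹.toReal)) * M ^ (p⁻¹.toReal * q⁻¹.toReal) := by
        gcongr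
        · exact eLpq_top_one_bilinearOp_le.trans
            (mul_le_of_le_of_le_one (mul_le_of_le_of_le_one hA hua) hva)
        · exact eLpq_one_top_bilinearOp_le.trans
            (mul_le_of_le_of_le_one (mul_le_of_le_of_le_one hB hub) hvb)
        · exact eLpq_top_top_bilinearOp_le.trans
            (mul_le_of_le_of_le_one (mul_le_of_le_of_le_one hC h1) h1)
        · exact eLpq_one_one_bilinearOp_le.trans
            (mul_le_of_le_of_le_one (mul_le_of_le_of_le_one hD hud) hvd)
    _ = M := ENNReal.rpow_corners_eq_self M hθ0 hθ1 hφ0 hφ1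

end bilinearOp

lemma ofReal_norm_tsum_le_bilinearOp {d : ℕ} (K : Zd d → Zd d → Zd d → Zd d → Zd d → Zd d → ℂ)
    (c e : Zd d → Zd d → ℂ) (m' n' : Zd d) :
    ENNReal.ofReal ‖∑' m, ∑' n, ∑' m₀, ∑' n₀, K m' n' m n m₀ n₀ * c m n * e m₀ n₀‖
      ≤ bilinearOp (fun m' n' m n m₀ n₀ => ENNReal.ofReal ‖K m' n' m n m₀ n₀‖)
          (fun m n => ENNReal.ofReal ‖c m n‖) (fun m n => ENNReal.ofReal ‖e m n‖) m' n' := by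
  simp only [ofReal_norm, bilinearOp, bilinearForm, ← enorm_mul]
  exact enorm_tsum_le_tsum_enorm.trans <| ENNReal.tsum_le_tsum fun m =>
    enorm_tsum_le_tsum_enorm.trans <| ENNReal.tsum_le_tsum fun n =>
      enorm_tsum_le_tsum_enorm.trans <| ENNReal.tsum_le_tsum fun m₀ => enorm_tsum_le_tsum_enorm

theorem bilinear_matrix_lpq_bounded_general
    (d : ℕ)
    (K : Zd d → Zd d → Zd d → Zd d → Zd d → Zd d → ℂ)
    -- (a) `K ∈ ℓ^∞_n ℓ^∞_{n₀} ℓ¹_{n'} ℓ^∞_{m'} ℓ¹_m ℓ¹_{m₀}` :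
    (hKa : (⨆ n : Zd d, ⨆ n₀ : Zd d, ∑' n' : Zd d, ⨆ m' : Zd d,
        ∑' m : Zd d, ∑' m₀ : Zd d, ENNReal.ofReal ‖K m' n' m n m₀ n₀‖) < ⊤)
    -- (b) `K ∈ ℓ^∞_{n'} ℓ¹_n ℓ¹_{n₀} ℓ^∞_m ℓ^∞_{m₀} ℓ¹_{m'}` :
    (hKb : (⨆ n' : Zd d, ∑' n : Zd d, ∑' n₀ : Zd d, ⨆ m : Zd d, ⨆ m₀ : Zd d,
        ∑' m' : Zd d, ENNReal.ofReal ‖K m' n' m n m₀ n₀‖) < ⊤)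
    -- (c) `K ∈ ℓ^∞_{n'} ℓ^∞_{m'} ℓ¹_n ℓ¹_m ℓ¹_{n₀} ℓ¹_{m₀}` :
    (hKc : (⨆ n' : Zd d, ⨆ m' : Zd d, ∑' n : Zd d, ∑' m : Zd d,
        ∑' n₀ : Zd d, ∑' m₀ : Zd d, ENNReal.ofReal ‖K m' n' m n m₀ n₀‖) < ⊤)
    -- (d) `K ∈ ℓ^∞_n ℓ^∞_m ℓ^∞_{n₀} ℓ^∞_{m₀} ℓ¹_{n'} ℓ¹_{m'}` :
    (hKd : (⨆ n : Zd d, ⨆ m : Zd d, ⨆ n₀ : Zd d, ⨆ m₀ : Zd d,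
        ∑' n' : Zd d, ∑' m' : Zd d, ENNReal.ofReal ‖K m' n' m n m₀ n₀‖) < ⊤) :
    ∃ C > 0, ∀ p q : ℝ≥0∞, 1 ≤ p → 1 ≤ q → ∀ c e : Zd d → Zd d → ℂ,
      lpq p q (fun m' n' => ∑' m : Zd d, ∑' n : Zd d, ∑' m₀ : Zd d, ∑' n₀ : Zd d,
          K m' n' m n m₀ n₀ * c m n * e m₀ n₀)
        ≤ ENNReal.ofReal C * lpq p q c * lpq p q e := by
  set k : Zd d → Zd d → Zd d → Zd d → Zd d → Zd d → ℝ≥0∞ :=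
    fun m' n' m n m₀ n₀ => ENNReal.ofReal ‖K m' n' m n m₀ n₀‖
  set M := kernelBoundA k + kernelBoundB k + kernelBoundC k + kernelBoundD k
  have hM : M ≠ ⊤ := by
    simpa only [M, ne_eq, ENNReal.add_eq_top, not_or] using ⟨⟨⟨hKa.ne, hKb.ne⟩, hKc.ne⟩, hKd.ne⟩
  have hMC : M ≤ ENNReal.ofReal (M.toReal + 1) := by
    rw [ENNReal.ofReal_add ENNReal.toReal_nonneg zero_le_one, ENNReal.ofReal_toReal hM]
    exact le_self_add
  refine ⟨M.toReal + 1, by positivity, fun p q hp hq c e => ?_⟩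
  calc lpq p q _
      ≤ eLpq p q (bilinearOp k (fun m n => ENNReal.ofReal ‖c m n‖)
          (fun m n => ENNReal.ofReal ‖e m n‖)) := eLpq_mono (ofReal_norm_tsum_le_bilinearOp K c e)
    _ ≤ _ := eLpq_bilinearOp_le hp hq (by positivity)
          ((le_add_right (le_add_right le_self_add)).trans hMC)
          ((le_add_right (le_add_right le_add_self)).trans hMC)
          ((le_add_right le_add_self).trans hMC) (le_add_self.trans hMC) _ _

theorem bilinear_matrix_lpq_bounded
    (d : ℕ) (hd : 1 ≤ d) (α β : ℝ) (hα : 0 < α) (hβ : 0 < β)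
    (K : Zd d → Zd d → Zd d → Zd d → Zd d → Zd d → ℂ)
    -- (a) `K ∈ ℓ^∞_n ℓ^∞_{n₀} ℓ¹_{n'} ℓ^∞_{m'} ℓ¹_m ℓ¹_{m₀}` :
    (hKa : (⨆ n : Zd d, ⨆ n₀ : Zd d, ∑' n' : Zd d, ⨆ m' : Zd d,
        ∑' m : Zd d, ∑' m₀ : Zd d, ENNReal.ofReal ‖K m' n' m n m₀ n₀‖) < ⊤)
    -- (b) `K ∈ ℓ^∞_{n'} ℓ¹_n ℓ¹_{n₀} ℓ^∞_m ℓ^∞_{m₀} ℓ¹_{m'}` :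
    (hKb : (⨆ n' : Zd d, ∑' n : Zd d, ∑' n₀ : Zd d, ⨆ m : Zd d, ⨆ m₀ : Zd d,
        ∑' m' : Zd d, ENNReal.ofReal ‖K m' n' m n m₀ n₀‖) < ⊤)
    -- (c) `K ∈ ℓ^∞_{n'} ℓ^∞_{m'} ℓ¹_n ℓ¹_m ℓ¹_{n₀} ℓ¹_{m₀}` :
    (hKc : (⨆ n' : Zd d, ⨆ m' : Zd d, ∑' n : Zd d, ∑' m : Zd d,
        ∑' n₀ : Zd d, ∑' m₀ : Zd d, ENNReal.ofReal ‖K m' n' m n m₀ n₀‖) < ⊤)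
    -- (d) `K ∈ ℓ^∞_n ℓ^∞_m ℓ^∞_{n₀} ℓ^∞_{m₀} ℓ¹_{n'} ℓ¹_{m'}` :
    (hKd : (⨆ n : Zd d, ⨆ m : Zd d, ⨆ n₀ : Zd d, ⨆ m₀ : Zd d,
        ∑' n' : Zd d, ∑' m' : Zd d, ENNReal.ofReal ‖K m' n' m n m₀ n₀‖) < ⊤) :
    ∃ C > 0, ∀ p q : ℝ≥0∞, 1 ≤ p → 1 ≤ q → ∀ c e : Zd d → Zd d → ℂ,
      lpq p q (fun m' n' => ∑' m : Zd d, ∑' n : Zd d, ∑' m₀ : Zd d, ∑' n₀ : Zd d,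
          K m' n' m n m₀ n₀ * c m n * e m₀ n₀)
        ≤ ENNReal.ofReal C * lpq p q c * lpq p q e :=
  bilinear_matrix_lpq_bounded_general d K hKa hKb hKc hKd
end
end
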